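/- Let B be a C*-algebra, I a closed ideal of B, and x ∈ I. Then the distance from x to a closed ideal K of B equals the distance from x to I ∩ K, i.e. inf_{y ∈ K} ‖x − y‖ = inf_{z ∈ I ∩ K} ‖x − z‖. -/

import Mathlib

/-!
Given `y ∈ K` and `δ > 0`, functional calculus on `a = y⋆y` in the unitization produces
`e = a (a + δ)⁻¹`, which lies in `K` because `K` is closed (so closed under scalars, by an
approximate unit argument). Since `1 - e = δ (a + δ)⁻¹` has norm at most `1` and
`‖y (1 - e)‖² = ‖δ² a (a + δ)⁻²‖ ≤ δ`, we get `‖x - x e‖ ≤ ‖x - y‖ + √δ`, while `x e ∈ I ∩ K`.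
-/

open Unitization Metric CStarAlgebra

theorem TwoSidedIdeal.smul_mem_of_isClosed_of_isApproximateUnit {R A : Type*} [NonUnitalRing A]
    [TopologicalSpace A] [SMul R A] [ContinuousConstSMul R A] [SMulCommClass R A A]
    {l : Filter A} (hl : l.IsApproximateUnit) (K : TwoSidedIdeal A) (hK : IsClosed (K : Set A))
    (c : R) {y : A} (hy : y ∈ K) : c • y ∈ K := by
  have := hl.neBot
  refine hK.mem_of_tendsto ((hl.tendsto_mul_left y).const_smul c) (.of_forall fun e => ?_)
  rw [← mul_smul_comm]
  exact K.mul_mem_right _ _ hy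

theorem TwoSidedIdeal.smul_mem_of_isClosed {B : Type*} [NonUnitalCStarAlgebra B]
    (K : TwoSidedIdeal B) (hK : IsClosed (K : Set B)) (c : ℂ) {y : B} (hy : y ∈ K) :
    c • y ∈ K :=
  let _ := spectralOrder B
  let _ := spectralOrderedRing B
  K.smul_mem_of_isClosed_of_isApproximateUnit (increasingApproximateUnit B).toIsApproximateUnit
    hK c hy

theorem norm_mul_le_norm_sub_add {R : Type*} [NonUnitalSeminormedRing R] {x y u : R} {ε : ℝ}
    (hu : ‖u‖ ≤ 1) (hyu : ‖y * u‖ ≤ ε) : ‖x * u‖ ≤ ‖x - y‖ + ε :=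
  calc ‖x * u‖ = ‖(x - y) * u + y * u‖ := by rw [sub_mul, sub_add_cancel]
    _ ≤ ‖x - y‖ * ‖u‖ + ε := (norm_add_le _ _).trans (add_le_add (norm_mul_le _ _) hyu)
    _ ≤ ‖x - y‖ + ε := by nlinarith [norm_nonneg (x - y)]

theorem div_add_mul_mul_div_add_le {t δ : ℝ} (ht : 0 ≤ t) (hδ : 0 < δ) :
    δ / (t + δ) * (t * (δ / (t + δ))) ≤ δ := by
  rw [mul_div_assoc', div_mul_div_comm, div_le_iff₀ (by positivity)]
  nlinarith [mul_nonneg hδ.le (by positivity : 0 ≤ t ^ 2 + t * δ + δ ^ 2)]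

theorem exists_norm_one_sub_mul_le {A : Type*} [CStarAlgebra A] (y : A) {δ : ℝ} (hδ : 0 < δ) :
    ∃ w : A, ‖1 - star y * y * w‖ ≤ 1 ∧ ‖y * (1 - star y * y * w)‖ ^ 2 ≤ δ := by
  set a := star y * y
  have hσ : ∀ t ∈ spectrum ℝ a, 0 ≤ t := spectrum_star_mul_self_nonneg
  set g : ℝ → ℝ := fun t => δ / (|t| + δ)
  have hg : Continuous g := continuous_const.div (by fun_prop) fun t => by positivity
  have hh : Continuous fun t : ℝ => (|t| + δ)⁻¹ := by fun_prop (disch := intro t; positivity)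
  have hw : 1 - a * cfc (fun t : ℝ => (|t| + δ)⁻¹) a = cfc g a := by
    calc 1 - a * cfc (fun t : ℝ => (|t| + δ)⁻¹) a = cfc (fun t => 1 - t * (|t| + δ)⁻¹) a := by
          rw [cfc_sub (fun _ => 1) (fun t => t * (|t| + δ)⁻¹) a continuousOn_const
            (continuous_id.mul hh).continuousOn, cfc_const_one ℝ a,
            cfc_mul (fun t : ℝ => t) _ a continuousOn_id hh.continuousOn, cfc_id' ℝ a]
      _ = cfc g a := cfc_congr fun t ht => by
          have : t + δ ≠ 0 := by linarith [hσ t ht]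
          simp only [g, abs_of_nonneg (hσ t ht)]
          field_simp
          ring
  have hsa : IsSelfAdjoint (cfc g a) := cfc_predicate g a
  refine ⟨cfc (fun t : ℝ => (|t| + δ)⁻¹) a, ?_, ?_⟩
  · rw [hw]
    refine norm_cfc_le zero_le_one fun t ht => ?_
    rw [Real.norm_of_nonneg (by positivity)]
    exact div_le_one_of_le₀ (by simp) (by positivity)
  · rw [hw, sq, ← CStarRing.norm_star_mul_self, star_mul, hsa.star_eq,
      show cfc g a * star y * (y * cfc g a) = cfc (fun t => g t * (t * g t)) a by
        rw [cfc_mul g _ a hg.continuousOn, cfc_mul (fun t : ℝ => t) g a continuousOn_id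
          hg.continuousOn, cfc_id' ℝ a]
        simp only [a, mul_assoc]]
    refine norm_cfc_le hδ.le fun t ht => ?_
    rw [Real.norm_of_nonneg (by have := hσ t ht; positivity)]
    simpa [g, abs_of_nonneg (hσ t ht)] using div_add_mul_mul_div_add_le (hσ t ht) hδ

theorem TwoSidedIdeal.exists_mem_norm_sub_mul_le {B : Type*} [NonUnitalCStarAlgebra B]
    (K : TwoSidedIdeal B) (hK : IsClosed (K : Set B)) {y : B} (hy : y ∈ K) {ε : ℝ} (hε : 0 < ε) :
    ∃ e ∈ K, ∀ x : B, ‖x - x * e‖ ≤ ‖x - y‖ + ε := by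
  obtain ⟨w, hw, hyw⟩ := exists_norm_one_sub_mul_le (y : B⁺¹) (pow_pos hε 2)
  have hyw : ‖(y : B⁺¹) * (1 - star (y : B⁺¹) * y * w)‖ ≤ ε :=
    (pow_le_pow_iff_left₀ (norm_nonneg _) hε.le two_ne_zero).1 hyw
  have hyy : star y * y ∈ K := K.mul_mem_left _ _ hy
  refine ⟨w.fst • (star y * y) + star y * y * w.snd,
    K.add_mem (K.smul_mem_of_isClosed hK _ hyy) (K.mul_mem_right _ _ hyy), fun x => ?_⟩
  have he : ((w.fst • (star y * y) + star y * y * w.snd : B) : B⁺¹) = star (y : B⁺¹) * y * w := by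
    ext <;> simp
  rw [← norm_inr (𝕜 := ℂ), ← norm_inr (𝕜 := ℂ) (x - y), inr_sub, inr_sub, inr_mul, he,
    ← mul_one_sub]
  exact norm_mul_le_norm_sub_add hw hyw

theorem infDist_eq_infDist_inter_general {B : Type*} [NonUnitalCStarAlgebra B]
    (I K : TwoSidedIdeal B) (hK : IsClosed (K : Set B))
    (x : B) (hx : x ∈ I) :
    Metric.infDist x (K : Set B) = Metric.infDist x ((I : Set B) ∩ (K : Set B)) := by
  refine le_antisymm
    (infDist_le_infDist_of_subset Set.inter_subset_right ⟨0, I.zero_mem, K.zero_mem⟩) ?_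
  refine (le_infDist ⟨0, K.zero_mem⟩).2 fun y hy => le_of_forall_pos_le_add fun ε hε => ?_
  obtain ⟨e, heK, he⟩ := K.exists_mem_norm_sub_mul_le hK hy hε
  calc infDist x ((I : Set B) ∩ (K : Set B)) ≤ dist x (x * e) :=
        infDist_le_dist_of_mem ⟨I.mul_mem_right _ _ hx, K.mul_mem_left _ _ heK⟩
    _ ≤ dist x y + ε := by simpa only [dist_eq_norm] using he x

/-- If `I` and `K` are closed ideals of a C*-algebra `B` and `x ∈ I`, then the distance
from `x` to `K` equals the distance from `x` to `I ∩ K`. -/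
theorem infDist_eq_infDist_inter {B : Type*} [NonUnitalCStarAlgebra B]
    (I K : TwoSidedIdeal B) (hI : IsClosed (I : Set B)) (hK : IsClosed (K : Set B))
    (x : B) (hx : x ∈ I) :
    Metric.infDist x (K : Set B) = Metric.infDist x ((I : Set B) ∩ (K : Set B)) :=
  infDist_eq_infDist_inter_general I K hK x hx
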